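/- arXiv:1906.02514 — 2 statements merged into one kernel-verified Lean document; each statement's English description precedes it below -/
import Mathlib

section
/- ζ_G(1/(2mλ)) ≤ (2m)^{2m} / (e·(2m−1)^{2m}), where m is the number of edges of G and λ is the dominant eigenvalue of the adjacency matrix T of the oriented line graph. -/
/-!
Bounding `tr(T^k)` by `2m λ^k` termwise compares the exponent of `ζ_G(x)` with
`2m ∑_{k ≥ 2} (λx)^k / k = 2m (-log (1 - λx) - λx)`, the tail of the logarithm series.
At `x = 1/(2mλ)` this is `2m log (2m/(2m-1)) - 1`, whose exponential is the stated bound.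
-/

open Real Set Filter Topology

/-- The Ihara zeta function of a graph, expressed through the power series
`ζ_G(x) = exp (∑_{k ≥ 2} tr(T^k) x^k / k)`, where `T` is the adjacency matrix of the
oriented line graph. -/
noncomputable def zetaG {n : ℕ} (T : Matrix (Fin n) (Fin n) ℝ) (x : ℝ) : ℝ :=
  Real.exp (∑' k : ℕ, if 2 ≤ k then (T ^ k).trace * x ^ k / k else 0)

theorem Real.hasSum_ite_two_le_pow_div {y : ℝ} (hy : |y| < 1) :
    HasSum (fun k : ℕ => if 2 ≤ k then y ^ k / k else 0) (-log (1 - y) - y) := by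
  have hlog : HasSum (fun k : ℕ => y ^ k / k) (-log (1 - y)) := by
    rw [← hasSum_nat_add_iff' 1]
    simpa using hasSum_pow_div_log_of_abs_lt_one hy
  have hterms : (fun k : ℕ => if 2 ≤ k then y ^ k / k else 0) =
      fun k : ℕ => y ^ k / k - if k = 1 then y else 0 := by
    funext k
    rcases k with _ | _ | k <;> simp
  rw [hterms]
  exact hlog.sub (hasSum_ite_eq 1 y)

theorem tsum_ite_two_le_mul_pow_div_le {t : ℕ → ℝ} {C lam x : ℝ} (ht_nonneg : ∀ k, 0 ≤ t k)
    (ht_le : ∀ k, t k ≤ C * lam ^ k) (hx : 0 ≤ x) (hlx : |lam * x| < 1) :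
    ∑' k : ℕ, (if 2 ≤ k then t k * x ^ k / k else 0) ≤
      C * (-log (1 - lam * x) - lam * x) := by
  have hbound := (Real.hasSum_ite_two_le_pow_div hlx).mul_left C
  have hle : ∀ k : ℕ, (if 2 ≤ k then t k * x ^ k / k else 0) ≤
      C * (if 2 ≤ k then (lam * x) ^ k / k else 0) := by
    intro k
    split_ifs
    · rw [mul_pow, ← mul_div_assoc, ← mul_assoc]
      gcongr
      exact ht_le k
    · simp
  have hnonneg : ∀ k : ℕ, 0 ≤ (if 2 ≤ k then t k * x ^ k / k else 0) := by
    intro k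
    split_ifs
    · have := ht_nonneg k
      positivity
    · exact le_rfl
  exact hasSum_le hle (Summable.of_nonneg_of_le hnonneg hle hbound.summable).hasSum hbound

theorem zetaG_le_exp_of_trace_le {n : ℕ} {T : Matrix (Fin n) (Fin n) ℝ} {C lam x : ℝ}
    (htr_nonneg : ∀ k : ℕ, 0 ≤ (T ^ k).trace) (htr_le : ∀ k : ℕ, (T ^ k).trace ≤ C * lam ^ k)
    (hx : 0 ≤ x) (hlx : |lam * x| < 1) :
    zetaG T x ≤ exp (C * (-log (1 - lam * x) - lam * x)) :=
  exp_le_exp.mpr (tsum_ite_two_le_mul_pow_div_le htr_nonneg htr_le hx hlx)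

theorem Real.exp_natCast_mul_neg_log_one_sub_one_div_sub_one_div {N : ℕ} (hN : 1 < N) :
    exp (N * (-log (1 - 1 / N) - 1 / N)) = (N : ℝ) ^ N / (exp 1 * ((N : ℝ) - 1) ^ N) := by
  have hN' : (1 : ℝ) < N := by exact_mod_cast hN
  have hsub : 1 - 1 / (N : ℝ) = (N - 1) / N := by field_simp
  have hexponent : (N : ℝ) * (-log (1 - 1 / N) - 1 / N) = N * log N - N * log (N - 1) - 1 := by
    rw [hsub, log_div (by linarith) (by linarith)]
    field_simp
    ring
  rw [hexponent, exp_sub, exp_sub, exp_nat_mul, exp_nat_mul, exp_log (by linarith),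
    exp_log (by linarith)]
  field_simp

theorem zeta_value_bound_at_inv_two_m_lam (m : ℕ) (hm : 2 ≤ m)
    (T : Matrix (Fin (2 * m)) (Fin (2 * m)) ℝ)
    (lam : ℝ) (hlampos : 0 < lam)
    (htr_nonneg : ∀ k : ℕ, 0 ≤ (T ^ k).trace)
    (htr_ub : ∀ k : ℕ, (T ^ k).trace ≤ 2 * (m : ℝ) * lam ^ k) :
    zetaG T (1 / (2 * (m : ℝ) * lam)) ≤
      (2 * (m : ℝ)) ^ (2 * m) / (Real.exp 1 * (2 * (m : ℝ) - 1) ^ (2 * m)) := by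
  have hm' : (4 : ℝ) ≤ 2 * m := by norm_cast; omega
  have hlx : lam * (1 / (2 * m * lam)) = 1 / (2 * m) := by field_simp
  have hclosed := Real.exp_natCast_mul_neg_log_one_sub_one_div_sub_one_div (N := 2 * m) (by omega)
  push_cast at hclosed
  calc zetaG T (1 / (2 * (m : ℝ) * lam))
      ≤ exp (2 * m * (-log (1 - 1 / (2 * m)) - 1 / (2 * m))) := by
        have hlx_lt : |lam * (1 / (2 * m * lam))| < 1 := by
          rw [hlx, abs_of_pos (by positivity), div_lt_one (by positivity)]
          linarith
        have := zetaG_le_exp_of_trace_le htr_nonneg htr_ub (by positivity) hlx_lt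
        rwa [hlx] at this
    _ = _ := hclosed
end

section
/- The function f : (1, ∞) → ℝ defined by f(x) = x^x / (e·(x−1)^{x+1}) is monotone decreasing; equivalently its derivative f'(x) = −(1/e)(x−1)^{−x−2} x^x ((x−1)log(x−1) − x log(x) + log(x) + 2) is negative for all x > 1. -/
open Real Set

/-- The auxiliary function `f(x) = x^x / (e (x-1)^{x+1})`. -/
noncomputable def auxF (x : ℝ) : ℝ :=
  x ^ x / (Real.exp 1 * (x - 1) ^ (x + 1))

/-!
The quotient rule writes `f'(x)` as a negative factor times
`g(x) = (x - 1) log (x - 1) - x log x + log x + 2 = 2 - (x - 1) log (x / (x - 1))`,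
and `log t ≤ t - 1` at `t = x / (x - 1)` gives `g(x) ≥ 1`.
-/

noncomputable def auxFDerivFactor (x : ℝ) : ℝ :=
  (x - 1) * Real.log (x - 1) - x * Real.log x + Real.log x + 2

lemma mul_log_div_le_sub {a b : ℝ} (ha : 0 < a) (hb : 0 < b) : a * log (b / a) ≤ b - a := by
  calc a * log (b / a) ≤ a * (b / a - 1) :=
        mul_le_mul_of_nonneg_left (log_le_sub_one_of_pos (div_pos hb ha)) ha.le
    _ = b - a := by field_simp

lemma one_le_auxFDerivFactor {x : ℝ} (hx : 1 < x) : 1 ≤ auxFDerivFactor x := by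
  have hx0 : 0 < x := zero_lt_one.trans hx
  have hx1 : 0 < x - 1 := sub_pos.mpr hx
  have key := mul_log_div_le_sub hx1 hx0
  rw [log_div hx0.ne' hx1.ne'] at key
  unfold auxFDerivFactor
  linarith

lemma hasDerivAt_auxF {x : ℝ} (hx : 1 < x) :
    HasDerivAt auxF
      (-(1 / Real.exp 1) * (x - 1) ^ (-x - 2) * x ^ x * auxFDerivFactor x) x := by
  have hx0 : 0 < x := zero_lt_one.trans hx
  have hx1 : 0 < x - 1 := sub_pos.mpr hx
  have hu := (hasDerivAt_id x).rpow (hasDerivAt_id x) hx0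
  have hv := (((hasDerivAt_id x).sub_const 1).rpow ((hasDerivAt_id x).add_const 1) hx1).const_mul
    (Real.exp 1)
  have hvx : Real.exp 1 * (x - 1) ^ (x + 1) ≠ 0 := by positivity
  refine (hu.div hv hvx).congr_deriv ?_
  simp only [id, one_mul, add_sub_cancel_right]
  have hA : x ^ (x - 1) = x ^ x / x := by rw [rpow_sub hx0, rpow_one]
  have hB : (x - 1) ^ (x + 1) = (x - 1) ^ x * (x - 1) := by rw [rpow_add hx1, rpow_one]
  have hC : (x - 1) ^ (-x - 2) = ((x - 1) ^ x * (x - 1) * (x - 1))⁻¹ := by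
    rw [show -x - 2 = -(x + 1 + 1) by ring, rpow_neg hx1.le, rpow_add hx1, rpow_add hx1, rpow_one]
  rw [hA, hB, hC]
  unfold auxFDerivFactor
  field_simp
  ring

lemma auxF_deriv_value_neg {x : ℝ} (hx : 1 < x) :
    -(1 / Real.exp 1) * (x - 1) ^ (-x - 2) * x ^ x * auxFDerivFactor x < 0 := by
  have hx0 : 0 < x := zero_lt_one.trans hx
  have hx1 : 0 < x - 1 := sub_pos.mpr hx
  simp only [neg_mul, neg_lt_zero]
  exact mul_pos (mul_pos (mul_pos (by positivity) (rpow_pos_of_pos hx1 _)) (rpow_pos_of_pos hx0 _))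
    (zero_lt_one.trans_le (one_le_auxFDerivFactor hx))

theorem auxF_strict_anti :
    StrictAntiOn auxF (Ioi (1 : ℝ)) ∧
      ∀ x : ℝ, 1 < x →
        deriv auxF x =
          -(1 / Real.exp 1) * (x - 1) ^ (-x - 2) * x ^ x *
            ((x - 1) * Real.log (x - 1) - x * Real.log x + Real.log x + 2) ∧
        deriv auxF x < 0 := by
  have deriv_eq : ∀ x : ℝ, 1 < x → deriv auxF x =
      -(1 / Real.exp 1) * (x - 1) ^ (-x - 2) * x ^ x * auxFDerivFactor x :=
    fun x hx => (hasDerivAt_auxF hx).deriv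
  refine ⟨?_, fun x hx => ⟨deriv_eq x hx, (deriv_eq x hx).trans_lt (auxF_deriv_value_neg hx)⟩⟩
  refine strictAntiOn_of_deriv_neg (convex_Ioi 1)
    (fun x hx => (hasDerivAt_auxF hx).continuousAt.continuousWithinAt) fun x hx => ?_
  rw [interior_Ioi] at hx
  exact (deriv_eq x hx).trans_lt (auxF_deriv_value_neg hx)
end
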